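/- In the setup below, for every weight w of O_x the eigenspace A_w is finite dimensional over k; indeed dim_k A_w ≤ rank_R A. Moreover the set of weights of O_x is contained in a finite union of cosets w₁ + mℤ, …, w_s + mℤ (there are only finitely many weight series). -/

import Mathlib

/-!
Modulo the centre `k c`, `ad x` acts on `L(𝔤,σ)` as the `R`-linear `ad x'` plus the degree
derivation, and the degree derivation raises the degree of `tⁿ • l` by `m n`; hence `tⁿ` maps
`A_w` into `A_{w+mn}`. Weight spaces of distinct weights are independent, so if the `v_i` are
`k`-independent vectors of one weight space, or nonzero vectors whose weights lie in distinct
cosets of `mℤ`, the family `tⁿ v_i` is `k`-independent. As `(tⁿ)` is a `k`-basis of `R`, the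
`v_i` are then `R`-independent, so there are at most `rank_R A` of them.
-/

open LaurentPolynomial TensorProduct

noncomputable section

/-- The weight space `A_w = {y ∈ A | O_x(y) = w • y}` of the operator `O_x` induced on `A`
by `ad(x)` (the bracket `⁅x, ℓ y⁆` equals `w • ℓ y` modulo the centre `k•c`). -/
def weightSubmodule {k A Lhat : Type} [Field k] [AddCommGroup A] [Module k A]
    [LieRing Lhat] [LieAlgebra k Lhat]
    (ℓ : A →ₗ[k] Lhat) (x c : Lhat) (w : k) : Submodule k A where
  carrier := {y | ∃ μ : k, ⁅x, ℓ y⁆ = w • ℓ y + μ • c}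
  add_mem' := by
    rintro a b ⟨μa, ha⟩ ⟨μb, hb⟩
    exact ⟨μa + μb, by rw [map_add, lie_add, ha, hb]; module⟩
  zero_mem' := ⟨0, by simp⟩
  smul_mem' := by
    rintro t a ⟨μ, h⟩
    exact ⟨t * μ, by rw [map_smul, lie_smul, h]; module⟩

theorem LinearIndependent.of_basis_smul {R S M ι κ : Type*} [CommSemiring R] [Semiring S]
    [AddCommMonoid M] [Module R S] [Module S M] [Module R M] [IsScalarTower R S M]
    (b : Module.Basis κ R S) {v : ι → M}
    (h : LinearIndependent R fun p : ι × κ => b p.2 • v p.1) : LinearIndependent S v := by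
  rw [LinearIndependent, Finsupp.linearCombination_smul] at h
  refine Function.Injective.of_comp_right h ((Finsupp.mapRange_surjective _ (map_zero _) ?_).comp
    (Finsupp.curryLinearEquiv R).surjective)
  exact fun s => ⟨b.repr s, b.linearCombination_repr s⟩

theorem linearIndependent_sigma_of_iSupIndep {R M η : Type*} {ιs : η → Type*} [Ring R]
    [AddCommGroup M] [Module R M] {p : η → Submodule R M} (hp : iSupIndep p)
    {f : ∀ j, ιs j → M} (hf : ∀ j i, f j i ∈ p j) (hindep : ∀ j, LinearIndependent R (f j)) :
    LinearIndependent R fun ji : Σ j, ιs j => f ji.1 ji.2 := by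
  have hspan : ∀ j, Submodule.span R (Set.range (f j)) ≤ p j := fun j =>
    Submodule.span_le.2 (Set.range_subset_iff.2 (hf j))
  exact linearIndependent_iUnion_finite hindep fun j t _ hj =>
    (hp.disjoint_biSup hj).mono (hspan j) (iSup₂_mono fun i _ => hspan i)

theorem iSupIndep.comap_of_injective {R M N ι : Type*} [Ring R] [AddCommGroup M] [Module R M]
    [AddCommGroup N] [Module R N] {p : ι → Submodule R N} (hp : iSupIndep p) {f : M →ₗ[R] N}
    (hf : Function.Injective f) : iSupIndep fun i => (p i).comap f := by
  intro i
  rw [disjoint_iff_inf_le]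
  intro y ⟨hyi, hy⟩
  have : f y ∈ p i ⊓ ⨆ (j) (_ : j ≠ i), p j :=
    ⟨hyi, (Submodule.map_le_iff_le_comap.2 (iSup₂_le fun j hj => Submodule.comap_mono
      (le_iSup₂_of_le j hj le_rfl)) : _) (Submodule.mem_map_of_mem hy)⟩
  rw [(hp i).eq_bot] at this
  exact (Submodule.mem_bot R).2 (hf ((Submodule.mem_bot R).1 this |>.trans (map_zero f).symm))

theorem LaurentPolynomial.T_smul_injective {R M : Type*} [Semiring R] [AddCommMonoid M]
    [Module R[T;T⁻¹] M] (n : ℤ) : Function.Injective fun y : M => (T n : R[T;T⁻¹]) • y :=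
  fun _ _ h => (isUnit_T n).smul_left_cancel.1 h

theorem zpow_add_natCast_mul_of_pow_eq_one {G₀ : Type*} [GroupWithZero G₀] {ζ : G₀} {m : ℕ}
    (hζ0 : ζ ≠ 0) (hζm : ζ ^ m = 1) (p n : ℤ) : ζ ^ (p + m * n) = ζ ^ p := by
  rw [zpow_add₀ hζ0, zpow_mul, zpow_natCast, hζm, one_zpow, mul_one]

section Weights

variable {k A L : Type} [Field k] [AddCommGroup A] [Module k A] [LieRing L] [LieAlgebra k L]

theorem mem_weightSubmodule_iff {ℓ : A →ₗ[k] L} {x c : L} {w : k} {y : A} :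
    y ∈ weightSubmodule ℓ x c w ↔ ⁅x, ℓ y⁆ - w • ℓ y ∈ k ∙ c := by
  simp only [Submodule.mem_span_singleton, eq_sub_iff_add_eq', eq_comm (a := _ + _)]
  rfl

theorem iSupIndep_weightSubmodule {ℓ : A →ₗ[k] L} {x c : L} (hxc : ⁅x, c⁆ = 0)
    (hℓ : ∀ y, ℓ y ∈ k ∙ c → y = 0) : iSupIndep (weightSubmodule ℓ x c) := by
  let π := (k ∙ c).mkQ ∘ₗ ℓ
  have hπ : Function.Injective π := by
    rw [← LinearMap.ker_eq_bot, eq_bot_iff]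
    exact fun y hy => (Submodule.mem_bot k).2 (hℓ y ((Submodule.Quotient.mk_eq_zero _).1 hy))
  have hc : k ∙ c ≤ (k ∙ c).comap (LieAlgebra.ad k L x) := by
    rw [Submodule.span_singleton_le_iff_mem, Submodule.mem_comap, LieAlgebra.ad_apply, hxc]
    exact zero_mem _
  let φ := (k ∙ c).mapQ (k ∙ c) (LieAlgebra.ad k L x) hc
  have hweight : weightSubmodule ℓ x c = fun w => (Module.End.eigenspace φ w).comap π := by
    ext w y
    rw [mem_weightSubmodule_iff, Submodule.mem_comap, Module.End.mem_eigenspace_iff]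
    simp [π, φ, ← Submodule.Quotient.mk_smul, Submodule.Quotient.eq]
  rw [hweight]
  exact (Module.End.eigenspaces_iSupIndep φ).comap_of_injective hπ

end Weights

section Laurent

variable {k A G : Type*} [Field k] [AddCommGroup A] [Module k[T;T⁻¹] A] [Module k A]
  [IsScalarTower k k[T;T⁻¹] A] [AddCommGroup G]

theorem rank_le_of_iSupIndep_of_T_smul_mem {W : G → Submodule k A} (hW : iSupIndep W) {a : G}
    (ha : Function.Injective fun n : ℤ => n • a)
    (hT : ∀ w (n : ℤ), ∀ y ∈ W w, (T n : k[T;T⁻¹]) • y ∈ W (w + n • a)) (w : G) :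
    Module.rank k (W w) ≤ Module.rank k[T;T⁻¹] A := by
  let b := Module.Basis.ofVectorSpace k (W w)
  have hshift : ∀ n : ℤ, LinearIndependent k fun j => (T n : k[T;T⁻¹]) • (b j : A) := fun n =>
    (b.linearIndependent.map' _ (W w).ker_subtype).map' (DistribSMul.toLinearMap k A (T n))
      (LinearMap.ker_eq_bot.2 (T_smul_injective n))
  have hsigma := linearIndependent_sigma_of_iSupIndep (hW.comp ((add_right_injective w).comp ha))
    (fun n j => hT w n _ (b j).2) hshift
  have hprod : LinearIndependent k fun p : _ × ℤ => (T p.2 : k[T;T⁻¹]) • (b p.1 : A) :=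
    (linearIndependent_equiv ((Equiv.sigmaEquivProd ℤ _).trans (Equiv.prodComm _ _))).1 hsigma
  have hv : LinearIndependent k[T;T⁻¹] fun j => (b j : A) :=
    LinearIndependent.of_basis_smul (AddMonoidAlgebra.basis ℤ k) hprod
  rw [← b.mk_eq_rank'']
  exact hv.cardinal_le_rank

theorem exists_finset_forall_ne_bot_eq_add_zsmul [Module.Finite k[T;T⁻¹] A]
    {W : G → Submodule k A} (hW : iSupIndep W) {a : G}
    (ha : Function.Injective fun n : ℤ => n • a)
    (hT : ∀ w (n : ℤ), ∀ y ∈ W w, (T n : k[T;T⁻¹]) • y ∈ W (w + n • a)) :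
    ∃ ws : Finset G, ∀ w, W w ≠ ⊥ → ∃ w' ∈ ws, ∃ n : ℤ, w = w' + n • a := by
  let π : G → G ⧸ AddSubgroup.zmultiples a := QuotientAddGroup.mk
  let Q := π '' {w | W w ≠ ⊥}
  have hrep : ∀ q : Q, ∃ w, π w = q ∧ ∃ y ∈ W w, y ≠ 0 := by
    rintro ⟨-, w, hw, rfl⟩
    exact ⟨w, rfl, (Submodule.ne_bot_iff _).1 hw⟩
  choose rep hrep v hv hv0 using hrep
  have hinj : Function.Injective fun p : Q × ℤ => rep p.1 + p.2 • a := by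
    rintro ⟨q, n⟩ ⟨q', n'⟩ (h : rep q + n • a = rep q' + n' • a)
    have hq : q = q' := Subtype.ext <| by
      rw [← hrep q, ← hrep q', QuotientAddGroup.eq]
      exact ⟨n - n', by
        change (n - n') • a = _
        rw [sub_zsmul]
        linear_combination (norm := abel) h⟩
    subst hq
    simpa using ha (add_left_cancel h)
  have hQ : Finite Q := by
    refine (LinearIndependent.of_basis_smul (AddMonoidAlgebra.basis ℤ k) (v := v) ?_).finite
    exact (hW.comp hinj).linearIndependent _ (fun p => hT _ p.2 _ (hv p.1))
      fun p => ((T_smul_injective p.2).ne_iff' (smul_zero _)).2 (hv0 p.1)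
  classical
  have := Fintype.ofFinite Q
  refine ⟨Finset.univ.image rep, fun w hw => ?_⟩
  obtain ⟨n, hn⟩ := AddSubgroup.mem_zmultiples_iff.1 <|
    QuotientAddGroup.eq.1 (hrep ⟨π w, w, hw, rfl⟩)
  refine ⟨rep ⟨π w, w, hw, rfl⟩, Finset.mem_image_of_mem _ (Finset.mem_univ _), n, ?_⟩
  rw [hn]
  abel

end Laurent

theorem lie_map_sub_map_lie_mem_of_span_eq_top {k L L' : Type*} [CommRing k] [LieRing L]
    [LieAlgebra k L] [LieRing L'] [LieAlgebra k L'] {f : L →ₗ[k] L'} {S : Set L}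
    (hS : Submodule.span k S = ⊤) {P : Submodule k L'}
    (h : ∀ a ∈ S, ∀ b ∈ S, ⁅f a, f b⁆ - f ⁅a, b⁆ ∈ P) (a b : L) : ⁅f a, f b⁆ - f ⁅a, b⁆ ∈ P := by
  induction (hS ▸ Submodule.mem_top : a ∈ _), (hS ▸ Submodule.mem_top : b ∈ _)
    using Submodule.span_induction₂ with
  | mem_mem a b ha hb => exact h a ha b hb
  | zero_left => simp
  | zero_right => simp
  | add_left _ _ _ _ _ _ h₁ h₂ =>
    convert add_mem h₁ h₂ using 1
    simp only [map_add, add_lie]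
    abel
  | add_right _ _ _ _ _ _ h₁ h₂ =>
    convert add_mem h₁ h₂ using 1
    simp only [map_add, lie_add]
    abel
  | smul_left r _ _ _ _ h₁ =>
    convert Submodule.smul_mem _ r h₁ using 1
    simp only [map_smul, smul_lie, smul_sub]
  | smul_right r _ _ _ _ h₁ =>
    convert Submodule.smul_mem _ r h₁ using 1
    simp only [map_smul, lie_smul, smul_sub]

section TwistedLoop

variable {k 𝔤 Lg Lhat : Type*} [Field k] [LieRing 𝔤] [LieAlgebra k 𝔤] [LieRing Lhat]
  [LieAlgebra k Lhat] {σ : 𝔤 ≃ₗ⁅k⁆ 𝔤} {ζ : k} {m : ℕ}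

theorem span_setOf_homogeneous_eq_top [AddCommGroup Lg] [Module k Lg] {u : ℤ → 𝔤 →ₗ[k] Lg}
    (hu_span : ∀ l : Lg, ∃ f : ℤ →₀ 𝔤, (∀ i, σ (f i) = ζ ^ i • f i) ∧
      l = f.sum fun i yi => u i yi) :
    Submodule.span k {l | ∃ p y, σ y = ζ ^ p • y ∧ u p y = l} = ⊤ := by
  refine Submodule.eq_top_iff'.2 fun l => ?_
  obtain ⟨f, hf, rfl⟩ := hu_span l
  exact Submodule.sum_mem _ fun i _ => Submodule.subset_span ⟨i, f i, hf i, rfl⟩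

theorem T_smul_eq [AddCommGroup Lg] [Module k Lg] [Module k[T;T⁻¹] Lg] {u : ℤ → 𝔤 →ₗ[k] Lg}
    (hζ0 : ζ ≠ 0) (hζm : ζ ^ m = 1)
    (hu_t : ∀ (p : ℤ) (y : 𝔤), σ y = ζ ^ p • y →
      (T 1 : LaurentPolynomial k) • u p y = u (p + (m : ℤ)) y)
    (n p : ℤ) (y : 𝔤) (hy : σ y = ζ ^ p • y) :
    (T n : k[T;T⁻¹]) • u p y = u (p + m * n) y := by
  have hshift : ∀ n : ℤ, σ y = ζ ^ (p + m * n) • y := fun n => by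
    rw [zpow_add_natCast_mul_of_pow_eq_one hζ0 hζm, hy]
  induction n using Int.induction_on with
  | zero => simp
  | succ n ih =>
    rw [T_add, mul_comm, mul_smul, ih, hu_t _ _ (hshift n)]
    ring_nf
  | pred n ih =>
    have h := hu_t _ _ (hshift (-n - 1))
    rw [show p + m * (-n - 1) + m = p + m * -n by ring, ← ih] at h
    have hT : (T (-n - 1) : k[T;T⁻¹]) = T (-1) * T (-n) := by rw [← T_add]; ring_nf
    rw [hT, mul_smul, ← h, smul_smul, ← T_add, neg_add_cancel, T_zero, one_smul]

theorem exists_forall_lie_T_smul_eq [LieRing Lg] [LieAlgebra k[T;T⁻¹] Lg] [LieAlgebra k Lg]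
    [IsScalarTower k k[T;T⁻¹] Lg] {u : ℤ → 𝔤 →ₗ[k] Lg} {ι : Lg →ₗ[k] Lhat} {d : Lhat}
    (hζ0 : ζ ≠ 0) (hζm : ζ ^ m = 1)
    (hu_t : ∀ (p : ℤ) (y : 𝔤), σ y = ζ ^ p • y →
      (T 1 : LaurentPolynomial k) • u p y = u (p + (m : ℤ)) y)
    (hu_span : ∀ l : Lg, ∃ f : ℤ →₀ 𝔤, (∀ i, σ (f i) = ζ ^ i • f i) ∧
      l = f.sum fun i yi => u i yi)
    (hd : ∀ (p : ℤ) (y : 𝔤), σ y = ζ ^ p • y →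
      ⁅d, ι (u p y)⁆ = (p : k) • ι (u p y))
    (l : Lg) : ∃ l₂ : Lg, ∀ n : ℤ, ⁅d, ι ((T n : k[T;T⁻¹]) • l)⁆ =
      ι ((T n : k[T;T⁻¹]) • l₂) + (n • (m : k)) • ι ((T n : k[T;T⁻¹]) • l) := by
  have hspan := span_setOf_homogeneous_eq_top hu_span
  induction (hspan ▸ Submodule.mem_top : l ∈ _) using Submodule.span_induction with
  | mem _ hl =>
    obtain ⟨p, y, hy, rfl⟩ := hl
    refine ⟨(p : k) • u p y, fun n => ?_⟩
    rw [smul_comm, T_smul_eq hζ0 hζm hu_t n p y hy,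
      hd _ _ (by rw [zpow_add_natCast_mul_of_pow_eq_one hζ0 hζm, hy]), map_smul, ← add_smul]
    push_cast
    ring_nf
  | zero => exact ⟨0, by simp⟩
  | add _ _ _ _ h h' =>
    obtain ⟨l₂, hl₂⟩ := h
    obtain ⟨l₂', hl₂'⟩ := h'
    refine ⟨l₂ + l₂', fun n => ?_⟩
    simp only [smul_add, map_add, lie_add, hl₂, hl₂']
    abel
  | smul r _ _ h =>
    obtain ⟨l₂, hl₂⟩ := h
    refine ⟨r • l₂, fun n => ?_⟩
    simp only [smul_comm _ r, map_smul, lie_smul, hl₂, smul_add]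

end TwistedLoop

theorem lie_T_smul_sub_mem {k Lg Lhat : Type*} [Field k] [LieRing Lg] [LieAlgebra k[T;T⁻¹] Lg]
    [LieAlgebra k Lg] [IsScalarTower k k[T;T⁻¹] Lg] [LieRing Lhat] [LieAlgebra k Lhat]
    {ι : Lg →ₗ[k] Lhat} {c d : Lhat} {s : k} (hιc : ∀ l, ι l ∈ k ∙ c → l = 0)
    (hLie : ∀ l l', ⁅ι l, ι l'⁆ - ι ⁅l, l'⁆ ∈ k ∙ c)
    (hd : ∀ l, ∃ l₂, ∀ n : ℤ, ⁅d, ι ((T n : k[T;T⁻¹]) • l)⁆ =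
      ι ((T n : k[T;T⁻¹]) • l₂) + (n • s) • ι ((T n : k[T;T⁻¹]) • l))
    {a l l₀ : Lg} (h : ⁅ι a + d, ι l⁆ - ι l₀ ∈ k ∙ c) (n : ℤ) :
    ⁅ι a + d, ι ((T n : k[T;T⁻¹]) • l)⁆ - ι ((T n : k[T;T⁻¹]) • l₀) -
      (n • s) • ι ((T n : k[T;T⁻¹]) • l) ∈ k ∙ c := by
  obtain ⟨l₂, hl₂⟩ := hd l
  have hd0 : ⁅d, ι l⁆ = ι l₂ := by simpa using hl₂ 0
  have hl₀ : l₀ = ⁅a, l⁆ + l₂ := by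
    refine (sub_eq_zero.1 (hιc _ ?_)).symm
    convert sub_mem h (hLie a l) using 1
    rw [add_lie, hd0, map_sub, map_add]
    abel
  convert hLie a ((T n : k[T;T⁻¹]) • l) using 1
  rw [hl₀, add_lie, hl₂ n, lie_smul, smul_add, map_add]
  abel

theorem T_smul_mem_weightSubmodule {k A Lg Lhat : Type} [Field k] [LieRing Lg]
    [LieAlgebra k[T;T⁻¹] Lg] [LieAlgebra k Lg] [IsScalarTower k k[T;T⁻¹] Lg] [LieRing Lhat]
    [LieAlgebra k Lhat] [AddCommGroup A] [Module k[T;T⁻¹] A] [Module k A]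
    {ι : Lg →ₗ[k] Lhat} {c d : Lhat} {s : k} (hιc : ∀ l, ι l ∈ k ∙ c → l = 0)
    (hLie : ∀ l l', ⁅ι l, ι l'⁆ - ι ⁅l, l'⁆ ∈ k ∙ c)
    (hd : ∀ l, ∃ l₂, ∀ n : ℤ, ⁅d, ι ((T n : k[T;T⁻¹]) • l)⁆ =
      ι ((T n : k[T;T⁻¹]) • l₂) + (n • s) • ι ((T n : k[T;T⁻¹]) • l))
    (j : A →ₗ[k[T;T⁻¹]] Lg) {ℓ : A →ₗ[k] Lhat} (hℓ : ∀ y, ℓ y = ι (j y)) (a : Lg) {w : k}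
    (n : ℤ) {y : A} (hy : y ∈ weightSubmodule ℓ (ι a + d) c w) :
    (T n : k[T;T⁻¹]) • y ∈ weightSubmodule ℓ (ι a + d) c (w + n • s) := by
  rw [mem_weightSubmodule_iff, hℓ] at hy ⊢
  have h := lie_T_smul_sub_mem hιc hLie hd (a := a) (l := j y) (l₀ := w • j y)
    (by rwa [map_smul]) n
  rw [smul_comm _ w, map_smul ι] at h
  rw [map_smul j, add_smul]
  convert h using 1
  abel

theorem finiteness_of_weight_spaces_general
    -- the base field
    (k : Type) [Field k] [CharZero k]
    -- the simple finite-dimensional Lie algebra 𝔤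
    (𝔤 : Type) [LieRing 𝔤] [LieAlgebra k 𝔤]
    -- the order m of σ and a primitive m-th root of unity ζ
    (m : ℕ) (hm : 0 < m)
    (σ : 𝔤 ≃ₗ⁅k⁆ 𝔤)
    (ζ : k) (hζ : IsPrimitiveRoot ζ m)
    -- the twisted loop algebra L(𝔤,σ) = ⊕_{i∈ℤ} 𝔤_ī ⊗ sⁱ, an R-Lie algebra for
    -- R = k[t^{±1}] = LaurentPolynomial k (with t = sᵐ);
    -- `u p y` represents `y ⊗ sᵖ` for `y ∈ 𝔤_p̄`, i.e. `σ y = ζ^p • y`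
    (Lg : Type) [LieRing Lg] [LieAlgebra (LaurentPolynomial k) Lg]
    [LieAlgebra k Lg] [IsScalarTower k (LaurentPolynomial k) Lg]
    (u : ℤ → 𝔤 →ₗ[k] Lg)
    (hu_bracket : ∀ (p q : ℤ) (y z : 𝔤), σ y = ζ ^ p • y → σ z = ζ ^ q • z →
      ⁅u p y, u q z⁆ = u (p + q) ⁅y, z⁆)
    (hu_t : ∀ (p : ℤ) (y : 𝔤), σ y = ζ ^ p • y →
      (T 1 : LaurentPolynomial k) • u p y = u (p + (m : ℤ)) y)
    (hu_span : ∀ l : Lg, ∃ f : ℤ →₀ 𝔤, (∀ i, σ (f i) = ζ ^ i • f i) ∧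
      l = f.sum fun i yi => u i yi)
    -- the twisted affine Kac–Moody algebra L̂(𝔤,σ) = L(𝔤,σ) ⊕ kc ⊕ kd
    (Lhat : Type) [LieRing Lhat] [LieAlgebra k Lhat]
    (c d : Lhat) (ι : Lg →ₗ[k] Lhat)
    (hc : ∀ z : Lhat, ⁅c, z⁆ = 0)
    (hd : ∀ (p : ℤ) (y : 𝔤), σ y = ζ ^ p • y →
      ⁅d, ι (u p y)⁆ = (p : k) • ι (u p y))
    (hbr : ∀ (p q : ℤ) (y z : 𝔤), σ y = ζ ^ p • y → σ z = ζ ^ q • z →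
      ⁅ι (u p y), ι (u q z)⁆ =
        ι (u (p + q) ⁅y, z⁆) +
          (if p + q = 0 then (p : k) * killingForm k 𝔤 y z else 0) • c)
    (huniq : ∀ (l : Lg) (a b : k), ι l + a • c + b • d = 0 → l = 0 ∧ a = 0 ∧ b = 0)
    -- the R-Lie subalgebra A of L(𝔤,σ), free of finite rank over R,
    -- with A ⊗_R K semisimple over the fraction field K of R
    (A : Type) [LieRing A] [LieAlgebra (LaurentPolynomial k) A]
    [Module k A] [IsScalarTower k (LaurentPolynomial k) A]
    [Module.Finite (LaurentPolynomial k) A]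
    (j : A →ₗ⁅LaurentPolynomial k⁆ Lg) (hj : Function.Injective j)
    -- the embedding ℓ = ι ∘ j of A into L̂(𝔤,σ)
    (ℓ : A →ₗ[k] Lhat) (hℓ : ∀ a : A, ℓ a = ι (j a))
    -- the element x = x' + d with 0 ≠ x' ∈ A, with ad(x) k-diagonalizable on Â
    (x' : A) (x : Lhat) (hx : x = ℓ x' + d)
    :
    (∀ w : k, weightSubmodule ℓ x c w ≠ ⊥ →
      Module.Finite k ↥(weightSubmodule ℓ x c w) ∧
      Module.rank k ↥(weightSubmodule ℓ x c w) ≤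
        Module.rank (LaurentPolynomial k) A) ∧
    (∃ ws : Finset k, ∀ w : k, weightSubmodule ℓ x c w ≠ ⊥ →
      ∃ w' ∈ ws, ∃ n : ℤ, w = w' + (((m : ℤ) * n : ℤ) : k)) := by
  have hζ0 : ζ ≠ 0 := hζ.ne_zero hm.ne'
  have hιc : ∀ l, ι l ∈ k ∙ c → l = 0 := fun l hl => by
    obtain ⟨μ, hμ⟩ := Submodule.mem_span_singleton.1 hl
    exact (huniq l (-μ) 0 (by rw [← hμ]; simp)).1
  have hLie := lie_map_sub_map_lie_mem_of_span_eq_top (span_setOf_homogeneous_eq_top hu_span) <| by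
    rintro _ ⟨p, y, hy, rfl⟩ _ ⟨q, z, hz, rfl⟩
    rw [hbr p q y z hy hz, hu_bracket p q y z hy hz, add_sub_cancel_left]
    exact Submodule.smul_mem _ _ (Submodule.mem_span_singleton_self c)
  have hdT := exists_forall_lie_T_smul_eq hζ0 hζ.pow_eq_one hu_t hu_span hd
  obtain rfl : x = ι (j x') + d := by rw [hx, hℓ]
  have hW : iSupIndep (weightSubmodule ℓ (ι (j x') + d) c) :=
    iSupIndep_weightSubmodule (by rw [← lie_skew, hc, neg_zero])
      fun y hy => hj (by rw [hιc (j y) (hℓ y ▸ hy), map_zero])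
  have hT : ∀ w (n : ℤ), ∀ y ∈ weightSubmodule ℓ (ι (j x') + d) c w,
      (T n : k[T;T⁻¹]) • y ∈ weightSubmodule ℓ (ι (j x') + d) c (w + n • (m : k)) :=
    fun _ n _ hy => T_smul_mem_weightSubmodule hιc hLie hdT j.toLinearMap hℓ (j x') n hy
  have ha : Function.Injective fun n : ℤ => n • (m : k) := fun n n' h => by
    simpa [hm.ne'] using h
  refine ⟨fun w _ => ?_, ?_⟩
  · have hrank := rank_le_of_iSupIndep_of_T_smul_mem hW ha hT w
    exact ⟨Module.rank_lt_aleph0_iff.1 (hrank.trans_lt (Module.rank_lt_aleph0 _ _)), hrank⟩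
  · obtain ⟨ws, hws⟩ := exists_finset_forall_ne_bot_eq_add_zsmul hW ha hT
    refine ⟨ws, fun w hw => ?_⟩
    obtain ⟨w', hw', n, rfl⟩ := hws w hw
    exact ⟨w', hw', n, by push_cast; rw [zsmul_eq_mul]; ring⟩

/-- Every weight space `A_w` is finite dimensional over `k` with
`dim_k A_w ≤ rank_R A`, and there are only finitely many weight series. -/
theorem finiteness_of_weight_spaces
    -- the base field
    (k : Type) [Field k] [IsAlgClosed k] [CharZero k]
    -- the simple finite-dimensional Lie algebra 𝔤
    (𝔤 : Type) [LieRing 𝔤] [LieAlgebra k 𝔤] [FiniteDimensional k 𝔤]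
    [LieAlgebra.IsSimple k 𝔤]
    -- the order m of σ and a primitive m-th root of unity ζ
    (m : ℕ) (hm : 0 < m)
    (σ : 𝔤 ≃ₗ⁅k⁆ 𝔤) (hσ : ∀ y : 𝔤, (⇑σ)^[m] y = y)
    (ζ : k) (hζ : IsPrimitiveRoot ζ m)
    -- the twisted loop algebra L(𝔤,σ) = ⊕_{i∈ℤ} 𝔤_ī ⊗ sⁱ, an R-Lie algebra for
    -- R = k[t^{±1}] = LaurentPolynomial k (with t = sᵐ);
    -- `u p y` represents `y ⊗ sᵖ` for `y ∈ 𝔤_p̄`, i.e. `σ y = ζ^p • y`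
    (Lg : Type) [LieRing Lg] [LieAlgebra (LaurentPolynomial k) Lg]
    [LieAlgebra k Lg] [IsScalarTower k (LaurentPolynomial k) Lg]
    (u : ℤ → 𝔤 →ₗ[k] Lg)
    (hu_bracket : ∀ (p q : ℤ) (y z : 𝔤), σ y = ζ ^ p • y → σ z = ζ ^ q • z →
      ⁅u p y, u q z⁆ = u (p + q) ⁅y, z⁆)
    (hu_t : ∀ (p : ℤ) (y : 𝔤), σ y = ζ ^ p • y →
      (T 1 : LaurentPolynomial k) • u p y = u (p + (m : ℤ)) y)
    (hu_span : ∀ l : Lg, ∃ f : ℤ →₀ 𝔤, (∀ i, σ (f i) = ζ ^ i • f i) ∧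
      l = f.sum fun i yi => u i yi)
    (hu_ind : ∀ f : ℤ →₀ 𝔤, (∀ i, σ (f i) = ζ ^ i • f i) →
      (f.sum fun i yi => u i yi) = 0 → f = 0)
    -- the twisted affine Kac–Moody algebra L̂(𝔤,σ) = L(𝔤,σ) ⊕ kc ⊕ kd
    (Lhat : Type) [LieRing Lhat] [LieAlgebra k Lhat]
    (c d : Lhat) (ι : Lg →ₗ[k] Lhat)
    (hc : ∀ z : Lhat, ⁅c, z⁆ = 0)
    (hd : ∀ (p : ℤ) (y : 𝔤), σ y = ζ ^ p • y →
      ⁅d, ι (u p y)⁆ = (p : k) • ι (u p y))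
    (hbr : ∀ (p q : ℤ) (y z : 𝔤), σ y = ζ ^ p • y → σ z = ζ ^ q • z →
      ⁅ι (u p y), ι (u q z)⁆ =
        ι (u (p + q) ⁅y, z⁆) +
          (if p + q = 0 then (p : k) * killingForm k 𝔤 y z else 0) • c)
    (hdec : ∀ z : Lhat, ∃ (l : Lg) (a b : k), z = ι l + a • c + b • d)
    (huniq : ∀ (l : Lg) (a b : k), ι l + a • c + b • d = 0 → l = 0 ∧ a = 0 ∧ b = 0)
    -- the invariant nondegenerate bilinear form (·,·) on L̂(𝔤,σ)
    (B : LinearMap.BilinForm k Lhat)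
    (hBsymm : ∀ z w : Lhat, B z w = B w z)
    (hBinv : ∀ z w y : Lhat, B ⁅z, w⁆ y = B z ⁅w, y⁆)
    (hBval : ∀ (p q : ℤ) (y z : 𝔤), σ y = ζ ^ p • y → σ z = ζ ^ q • z →
      B (ι (u p y)) (ι (u q z)) = if p + q = 0 then killingForm k 𝔤 y z else 0)
    (hBc : ∀ l : Lg, B c (ι l) = 0) (hBd : ∀ l : Lg, B d (ι l) = 0)
    (hBcc : B c c = 0) (hBdd : B d d = 0) (hBcd : B c d = 1)
    -- the R-Lie subalgebra A of L(𝔤,σ), free of finite rank over R,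
    -- with A ⊗_R K semisimple over the fraction field K of R
    (A : Type) [LieRing A] [LieAlgebra (LaurentPolynomial k) A]
    [Module k A] [IsScalarTower k (LaurentPolynomial k) A]
    [Module.Free (LaurentPolynomial k) A] [Module.Finite (LaurentPolynomial k) A]
    (hss : LieAlgebra.IsSemisimple (FractionRing (LaurentPolynomial k))
      (FractionRing (LaurentPolynomial k) ⊗[LaurentPolynomial k] A))
    (j : A →ₗ⁅LaurentPolynomial k⁆ Lg) (hj : Function.Injective j)
    -- the embedding ℓ = ι ∘ j of A into L̂(𝔤,σ)
    (ℓ : A →ₗ[k] Lhat) (hℓ : ∀ a : A, ℓ a = ι (j a))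
    -- Â = A ⊕ kc ⊕ kd, a subalgebra of L̂(𝔤,σ) on which the form is nondegenerate
    (Ahat : Submodule k Lhat)
    (hAhat : Ahat = LinearMap.range ℓ ⊔ Submodule.span k {c} ⊔ Submodule.span k {d})
    (hA_closed : ∀ z ∈ Ahat, ∀ w ∈ Ahat, ⁅z, w⁆ ∈ Ahat)
    (hBnd : ∀ z ∈ Ahat, (∀ w ∈ Ahat, B z w = 0) → z = 0)
    -- the element x = x' + d with 0 ≠ x' ∈ A, with ad(x) k-diagonalizable on Â
    (x' : A) (hx'0 : x' ≠ 0) (x : Lhat) (hx : x = ℓ x' + d)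
    (hdiag : ∀ z ∈ Ahat, z ∈ ⨆ w : k,
      Ahat ⊓ Module.End.eigenspace (LieAlgebra.ad k Lhat x) w)
    :
    (∀ w : k, weightSubmodule ℓ x c w ≠ ⊥ →
      Module.Finite k ↥(weightSubmodule ℓ x c w) ∧
      Module.rank k ↥(weightSubmodule ℓ x c w) ≤
        Module.rank (LaurentPolynomial k) A) ∧
    (∃ ws : Finset k, ∀ w : k, weightSubmodule ℓ x c w ≠ ⊥ →
      ∃ w' ∈ ws, ∃ n : ℤ, w = w' + (((m : ℤ) * n : ℤ) : k)) :=
  finiteness_of_weight_spaces_general k 𝔤 m hm σ ζ hζ Lg u hu_bracket hu_t hu_span Lhat c d ι hc hd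
    hbr huniq A j hj ℓ hℓ x' x hx
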